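/- Let x_b ∈ I, let M, M̃ be integers with M ≥ M̃ ≥ 1, let λ_0, λ_1 ∈ ℂ, and let c_0, c_1, d_0, …, d_{M̃−1} : ℝ → ℂ be continuous on a neighborhood of 0. Assume that, as h → 0: c_1(h)·𝔈_1(h) − λ_1 = O(h^M); c_0(h) − h·λ_0 + c_1(h)·𝔈_0(h) = O(h^{M+1}); and, for each 0 ≤ ℓ ≤ M̃−1, d_ℓ(h) − h·c_1(h)·𝔉_ℓ(h) = O(h^{M̃−ℓ}). Then for every infinitely differentiable u : I → ℂ satisfying (a u')' + k u = f at every x ∈ I with x ≥ x_b, one has, as h → 0⁺: c_0(h)·u(x_b) + c_1(h)·u(x_b+h) − h·Σ_{ℓ=0}^{M̃−1} d_ℓ(h)·h^ℓ·f^{(ℓ)}(x_b) − h·(λ_0·u(x_b) + λ_1·u'(x_b)) = O(h^{M̃+1}); equivalently, the boundary scheme L_h^B u(x_b) := h^{−1}[c_0(h)u(x_b) + c_1(h)u(x_b+h)] − Σ_{ℓ=0}^{M̃−1} d_ℓ(h)h^ℓ f^{(ℓ)}(x_b) satisfies L_h^B u(x_b) − (λ_0 u(x_b) + λ_1 u'(x_b))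 = O(h^{M̃}). -/

import Mathlib

open Filter Topology Asymptotics

/-- `Ecoef a k n = (E_{n+2,0}, E_{n+2,1})` from the recursion of the paper. -/
noncomputable def Ecoef (a : ℝ → ℝ) (k : ℝ → ℂ) : ℕ → (ℝ → ℂ) × (ℝ → ℂ)
  | 0 => (fun x => -k x / (a x : ℂ), fun x => -((deriv a x : ℝ) : ℂ) / (a x : ℂ))
  | n + 1 =>
      (fun x => deriv (Ecoef a k n).1 x - k x / (a x : ℂ) * (Ecoef a k n).2 x,
       fun x => (Ecoef a k n).1 x + deriv (Ecoef a k n).2 x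
          - ((deriv a x : ℝ) : ℂ) / (a x : ℂ) * (Ecoef a k n).2 x)

/-- `E_{j,0}` for `j ≥ 2` (junk value for `j < 2`). -/
noncomputable def Ej0 (a : ℝ → ℝ) (k : ℝ → ℂ) (j : ℕ) : ℝ → ℂ := (Ecoef a k (j - 2)).1

/-- `E_{j,1}` for `j ≥ 2` (junk value for `j < 2`). -/
noncomputable def Ej1 (a : ℝ → ℝ) (k : ℝ → ℂ) (j : ℕ) : ℝ → ℂ := (Ecoef a k (j - 2)).2

/-- `Fcoef a k n m = F_{n+2, m-1}` (second index shifted by one: `m = ℓ + 1`, `ℓ ≥ -1`). -/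
noncomputable def Fcoef (a : ℝ → ℝ) (k : ℝ → ℂ) : ℕ → ℕ → ℝ → ℂ
  | 0, 0 => fun x => (Ecoef a k 0).2 x / (a x : ℂ)
  | 0, 1 => fun x => 1 / (a x : ℂ)
  | 0, _ + 2 => fun _ => 0
  | n + 1, 0 => fun x => (Ecoef a k (n + 1)).2 x / (a x : ℂ)
  | n + 1, m + 1 => fun x => deriv (Fcoef a k n (m + 1)) x + Fcoef a k n m x

/-- `F_{j,ℓ}` for `j ≥ 2`, `ℓ ≥ 0` (junk value for `j < 2`). -/
noncomputable def Fjl (a : ℝ → ℝ) (k : ℝ → ℂ) (j ℓ : ℕ) : ℝ → ℂ := Fcoef a k (j - 2) (ℓ + 1)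

/-- `𝔈₀(h) = 1 + ∑_{j=2}^{B} E_{j,0}(x_b) h^j / j!`. -/
noncomputable def EPoly0 (a : ℝ → ℝ) (k : ℝ → ℂ) (xb : ℝ) (B : ℕ) (h : ℝ) : ℂ :=
  1 + ∑ j ∈ Finset.Icc 2 B, Ej0 a k j xb * (h : ℂ) ^ j / (Nat.factorial j : ℂ)

/-- `𝔈₁(h) = 1 + ∑_{j=2}^{B} E_{j,1}(x_b) h^(j-1) / j!`. -/
noncomputable def EPoly1 (a : ℝ → ℝ) (k : ℝ → ℂ) (xb : ℝ) (B : ℕ) (h : ℝ) : ℂ :=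
  1 + ∑ j ∈ Finset.Icc 2 B, Ej1 a k j xb * (h : ℂ) ^ (j - 1) / (Nat.factorial j : ℂ)

/-- `𝔉_ℓ(h) = ∑_{j=ℓ+2}^{B} F_{j,ℓ}(x_b) h^(j-ℓ-2) / j!`. -/
noncomputable def FPoly (a : ℝ → ℝ) (k : ℝ → ℂ) (xb : ℝ) (ℓ B : ℕ) (h : ℝ) : ℂ :=
  ∑ j ∈ Finset.Icc (ℓ + 2) B, Fjl a k j ℓ xb * (h : ℂ) ^ (j - ℓ - 2) / (Nat.factorial j : ℂ)

/-!
Differentiating `(a u')' + k u = f` repeatedly gives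
`u⁽ʲ⁾(x_b) = E_{j,0} u(x_b) + E_{j,1} u'(x_b) + ∑_ℓ F_{j,ℓ} f⁽ˡ⁾(x_b)` for `j ≥ 2`; one-sided
derivatives suffice, as the equation only holds for `x ≥ x_b`. Substituted into the Taylor
polynomial of degree `M + 1` of `u` at `x_b`, this regroups it as
`u 𝔈₀(h) + h u' 𝔈₁(h) + ∑_ℓ h^(ℓ+2) 𝔉_ℓ(h) f⁽ˡ⁾`. The conditions on `c₀, c₁, d_ℓ` then cancel
the residual up to `O(h^(M̃+1))`: passing from `𝔈₀` of degree `M + 1` to degree `M`, and from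
`𝔉_ℓ` of degree `M + 1` to degree `M̃ + 1`, only drops higher powers of `h`, and the Taylor
remainder `o(h^(M+1))` is multiplied by the bounded `c₁`.
-/

open Finset
open scoped ContDiff Nat

section Asymptotics

lemma isBigO_pow_of_le {m n : ℕ} (hmn : m ≤ n) :
    (fun h : ℝ => h ^ n) =O[𝓝 0] fun h => h ^ m := by
  rcases hmn.eq_or_lt with rfl | hlt
  · exact isBigO_refl _ _
  · exact (isLittleO_pow_pow hlt).isBigO

lemma isBigO_ofReal_pow (n : ℕ) : (fun h : ℝ => (h : ℂ) ^ n) =O[𝓝 0] fun h => h ^ n :=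
  (Complex.isBigO_ofReal_left.2 (isBigO_refl (fun h : ℝ => h ^ n) _)).congr_left fun h => by
    push_cast; rfl

lemma isBigO_const_mul_pow (c : ℂ) {m n : ℕ} (hmn : m ≤ n) :
    (fun h : ℝ => c * (h : ℂ) ^ n) =O[𝓝 0] fun h => h ^ m :=
  ((isBigO_ofReal_pow n).const_mul_left c).trans (isBigO_pow_of_le hmn)

lemma isBigO_sum_sub_sum_of_le {S T : Finset ℕ} (hST : S ⊆ T) {N : ℕ}
    (hN : ∀ j ∈ T \ S, N ≤ j) (c : ℕ → ℂ) :
    (fun h : ℝ => ∑ j ∈ T, c j * (h : ℂ) ^ j / (j ! : ℂ) - ∑ j ∈ S, c j * (h : ℂ) ^ j / (j ! : ℂ))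
      =O[𝓝 0] fun h => h ^ N := by
  simp_rw [← sum_sdiff_eq_sub hST]
  refine IsBigO.fun_sum fun j hj => ?_
  simpa only [mul_div_right_comm] using isBigO_const_mul_pow (c j / j !) (hN j hj)

end Asymptotics

lemma taylor_isLittleO_of_isOpen {E : Type*} [NormedAddCommGroup E] [NormedSpace ℝ E]
    {u : ℝ → E} {s : Set ℝ} {x : ℝ} {n : ℕ} (hs : IsOpen s) (hsc : Convex ℝ s)
    (hu : ContDiffOn ℝ n u s) (hx : x ∈ s) :
    (fun h : ℝ => u (x + h) - ∑ j ∈ range (n + 1), ((j ! : ℝ)⁻¹ * h ^ j) • iteratedDeriv j u x)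
      =o[𝓝 0] fun h => h ^ n := by
  have hT := taylor_isLittleO hsc hx hu
  rw [hs.nhdsWithin_eq hx] at hT
  have hshift : Tendsto (fun h : ℝ => x + h) (𝓝 0) (𝓝 x) :=
    (continuous_const.add continuous_id).tendsto' 0 x (add_zero x)
  refine (hT.comp_tendsto hshift).congr' (Eventually.of_forall fun h => ?_)
    (Eventually.of_forall fun h => by simp)
  simp [taylor_within_apply, iteratedDerivWithin_of_isOpen hs hx]

section Coefficients

variable {a : ℝ → ℝ} {k : ℝ → ℂ} {s : Set ℝ}

lemma ContDiffOn.div_ofReal {g : ℝ → ℂ} (hg : ContDiffOn ℝ ∞ g s) (ha : ContDiffOn ℝ ∞ a s)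
    (ha0 : ∀ x ∈ s, a x ≠ 0) : ContDiffOn ℝ ∞ (fun x => g x / (a x : ℂ)) s := by
  simp only [div_eq_mul_inv]
  exact hg.mul ((Complex.ofRealCLM.contDiff.comp_contDiffOn ha).inv fun x hx =>
    Complex.ofReal_ne_zero.2 (ha0 x hx))

lemma contDiffOn_Ecoef (hs : IsOpen s) (ha : ContDiffOn ℝ ∞ a s) (hk : ContDiffOn ℝ ∞ k s)
    (ha0 : ∀ x ∈ s, a x ≠ 0) (n : ℕ) :
    ContDiffOn ℝ ∞ (Ecoef a k n).1 s ∧ ContDiffOn ℝ ∞ (Ecoef a k n).2 s := by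
  have hda : ContDiffOn ℝ ∞ (fun x => ((deriv a x : ℝ) : ℂ)) s :=
    Complex.ofRealCLM.contDiff.comp_contDiffOn (ha.deriv_of_isOpen hs (by simp))
  induction n with
  | zero => exact ⟨hk.neg.div_ofReal ha ha0, hda.neg.div_ofReal ha ha0⟩
  | succ n ih =>
    exact ⟨(ih.1.deriv_of_isOpen hs (by simp)).sub ((hk.div_ofReal ha ha0).mul ih.2),
      (ih.1.add (ih.2.deriv_of_isOpen hs (by simp))).sub ((hda.div_ofReal ha ha0).mul ih.2)⟩

lemma contDiffOn_Fcoef (hs : IsOpen s) (ha : ContDiffOn ℝ ∞ a s) (hk : ContDiffOn ℝ ∞ k s)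
    (ha0 : ∀ x ∈ s, a x ≠ 0) : ∀ n m, ContDiffOn ℝ ∞ (Fcoef a k n m) s
  | 0, 0 => (contDiffOn_Ecoef hs ha hk ha0 0).2.div_ofReal ha ha0
  | 0, 1 => contDiffOn_const.div_ofReal ha ha0
  | 0, _ + 2 => contDiffOn_const
  | n + 1, 0 => (contDiffOn_Ecoef hs ha hk ha0 (n + 1)).2.div_ofReal ha ha0
  | n + 1, m + 1 =>
    ((contDiffOn_Fcoef hs ha hk ha0 n (m + 1)).deriv_of_isOpen hs (by simp)).add
      (contDiffOn_Fcoef hs ha hk ha0 n m)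

variable (a k)

lemma Fcoef_eq_zero : ∀ n m, n + 2 ≤ m → Fcoef a k n m = 0
  | 0, _ + 2, _ => rfl
  | n + 1, m + 1, hm => by
    have h1 := Fcoef_eq_zero n (m + 1) (by omega)
    have h2 := Fcoef_eq_zero n m (by omega)
    funext x
    simp [Fcoef, h1, h2]

lemma Fcoef_zero (n : ℕ) : Fcoef a k n 0 = fun x => (Ecoef a k n).2 x / (a x : ℂ) := by
  cases n <;> rfl

lemma sum_Fcoef_succ (n : ℕ) (x : ℝ) (g : ℕ → ℂ) :
    ∑ m ∈ range (n + 2), Fcoef a k (n + 1) (m + 1) x * g m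
      = ∑ m ∈ range (n + 1), deriv (Fcoef a k n (m + 1)) x * g m
        + (Ecoef a k n).2 x / (a x : ℂ) * g 0
        + ∑ m ∈ range (n + 1), Fcoef a k n (m + 1) x * g (m + 1) := by
  simp only [Fcoef, add_mul, sum_add_distrib]
  rw [sum_range_succ (fun m => deriv (Fcoef a k n (m + 1)) x * g m),
    Fcoef_eq_zero a k n (n + 2) le_rfl, sum_range_succ' (fun m => Fcoef a k n m x * g m),
    Fcoef_zero]
  simp only [deriv_zero, Pi.zero_apply, zero_mul, add_zero]
  ring

end Coefficients

lemma DifferentiableAt.deriv_eq_of_eventuallyEq_Ici {E : Type*} [NormedAddCommGroup E]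
    [NormedSpace ℝ E] {g G : ℝ → E} {G' : E} {c x : ℝ} (hg : DifferentiableAt ℝ g x)
    (hG : HasDerivAt G G' x) (hcx : c ≤ x) (heq : g =ᶠ[𝓝[Set.Ici c] x] G) :
    deriv g x = G' :=
  (uniqueDiffOn_Ici c x hcx).eq_deriv _ hg.hasDerivAt.hasDerivWithinAt
    (hG.hasDerivWithinAt.congr_of_eventuallyEq heq (heq.eq_of_nhdsWithin hcx))

lemma ContDiffOn.hasDerivAt_iteratedDeriv {E : Type*} [NormedAddCommGroup E] [NormedSpace ℝ E]
    {g : ℝ → E} {s : Set ℝ} {x : ℝ} (hg : ContDiffOn ℝ ∞ g s) (hs : IsOpen s) (hx : x ∈ s)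
    (m : ℕ) : HasDerivAt (iteratedDeriv m g) (iteratedDeriv (m + 1) g x) x := by
  rw [iteratedDeriv_succ]
  refine (((hg.differentiableOn_iteratedDerivWithin ?_ hs.uniqueDiffOn) x hx).differentiableAt
    (hs.mem_nhds hx)).congr_of_eventuallyEq
      ((iteratedDerivWithin_of_isOpen hs).eventuallyEq_of_mem (hs.mem_nhds hx)).symm |>.hasDerivAt
  exact_mod_cast WithTop.coe_lt_top _

section Solution

variable {a : ℝ → ℝ} {k f u : ℝ → ℂ}

lemma deriv_deriv_eq_of_ode {x : ℝ} (ha : DifferentiableAt ℝ a x)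
    (hu : DifferentiableAt ℝ (deriv u) x) (hax : a x ≠ 0)
    (hode : deriv (fun y => (a y : ℂ) * deriv u y) x + k x * u x = f x) :
    deriv (deriv u) x = -k x / (a x : ℂ) * u x
      + -((deriv a x : ℝ) : ℂ) / (a x : ℂ) * deriv u x + 1 / (a x : ℂ) * f x := by
  rw [(ha.hasDerivAt.ofReal_comp.fun_mul hu.hasDerivAt).deriv] at hode
  have hax' : (a x : ℂ) ≠ 0 := Complex.ofReal_ne_zero.2 hax
  field_simp
  linear_combination hode

theorem iteratedDeriv_eq_of_ode {s : Set ℝ} (hs : IsOpen s) (ha : ContDiffOn ℝ ∞ a s)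
    (hk : ContDiffOn ℝ ∞ k s) (hf : ContDiffOn ℝ ∞ f s) (hu : ContDiffOn ℝ ∞ u s)
    (ha0 : ∀ x ∈ s, a x ≠ 0) {xb : ℝ}
    (hode : ∀ x ∈ s, xb ≤ x → deriv (fun y => (a y : ℂ) * deriv u y) x + k x * u x = f x)
    (n : ℕ) : ∀ x ∈ s, xb ≤ x →
      iteratedDeriv (n + 2) u x = (Ecoef a k n).1 x * u x + (Ecoef a k n).2 x * deriv u x
        + ∑ m ∈ range (n + 1), Fcoef a k n (m + 1) x * iteratedDeriv m f x := by
  have hdiff {g : ℝ → ℂ} (hg : ContDiffOn ℝ ∞ g s) {x : ℝ} (hx : x ∈ s) :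
      HasDerivAt g (deriv g x) x :=
    ((hg.differentiableOn (by simp)).differentiableAt (hs.mem_nhds hx)).hasDerivAt
  have hu' : ContDiffOn ℝ ∞ (deriv u) s := hu.deriv_of_isOpen hs (by simp)
  have hu'' {x : ℝ} (hx : x ∈ s) (hxb : xb ≤ x) := deriv_deriv_eq_of_ode
    ((ha.differentiableOn (by simp)).differentiableAt (hs.mem_nhds hx))
    (hdiff hu' hx).differentiableAt (ha0 x hx) (hode x hx hxb)
  induction n with
  | zero =>
    intro x hx hxb
    rw [iteratedDeriv_succ, iteratedDeriv_one, hu'' hx hxb]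
    simp [Ecoef, Fcoef]
  | succ n ih =>
    intro x hx hxb
    have hE := contDiffOn_Ecoef hs ha hk ha0 n
    have hR : HasDerivAt (fun y => (Ecoef a k n).1 y * u y + (Ecoef a k n).2 y * deriv u y
          + ∑ m ∈ range (n + 1), Fcoef a k n (m + 1) y * iteratedDeriv m f y)
        (deriv (Ecoef a k n).1 x * u x + (Ecoef a k n).1 x * deriv u x
          + (deriv (Ecoef a k n).2 x * deriv u x + (Ecoef a k n).2 x * deriv (deriv u) x)
          + ∑ m ∈ range (n + 1), (deriv (Fcoef a k n (m + 1)) x * iteratedDeriv m f x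
            + Fcoef a k n (m + 1) x * iteratedDeriv (m + 1) f x)) x :=
      (((hdiff hE.1 hx).mul (hdiff hu hx)).add ((hdiff hE.2 hx).mul (hdiff hu' hx))).add
        (HasDerivAt.fun_sum fun m _ => (hdiff (contDiffOn_Fcoef hs ha hk ha0 n (m + 1)) hx).mul
          (hf.hasDerivAt_iteratedDeriv hs hx m))
    rw [iteratedDeriv_succ, ((hu.hasDerivAt_iteratedDeriv hs hx _).differentiableAt
      |>.deriv_eq_of_eventuallyEq_Ici hR hxb ?_), hu'' hx hxb, sum_add_distrib]
    · rw [sum_Fcoef_succ a k n x fun m => iteratedDeriv m f x, iteratedDeriv_zero]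
      simp only [Ecoef]
      ring
    · filter_upwards [mem_nhdsWithin_of_mem_nhds (hs.mem_nhds hx), self_mem_nhdsWithin]
        with y hys hyb
      exact ih y hys hyb

end Solution

section Polynomials

variable (a : ℝ → ℝ) (k : ℝ → ℂ) (xb : ℝ)

lemma pow_mul_FPoly (ℓ B : ℕ) (h : ℝ) :
    (h : ℂ) ^ (ℓ + 2) * FPoly a k xb ℓ B h
      = ∑ j ∈ Icc (ℓ + 2) B, Fjl a k j ℓ xb * (h : ℂ) ^ j / (j ! : ℂ) := by
  rw [FPoly, mul_sum]
  refine sum_congr rfl fun j hj => ?_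
  obtain ⟨i, rfl⟩ := Nat.exists_eq_add_of_le' (mem_Icc.1 hj).1
  rw [show i + (ℓ + 2) - ℓ - 2 = i by omega, pow_add]
  ring

lemma FPoly_eq_zero_of_le {ℓ B : ℕ} (hB : B ≤ ℓ + 1) (h : ℝ) : FPoly a k xb ℓ B h = 0 := by
  rw [FPoly, Icc_eq_empty (by omega), sum_empty]

theorem sum_taylor_eq_EPoly_FPoly {v g : ℕ → ℂ}
    (hv : ∀ j, 2 ≤ j → v j = Ej0 a k j xb * v 0 + Ej1 a k j xb * v 1
      + ∑ ℓ ∈ range (j - 1), Fjl a k j ℓ xb * g ℓ) {B : ℕ} (hB : 1 ≤ B) (h : ℝ) :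
    ∑ j ∈ range (B + 1), ((j ! : ℝ)⁻¹ * h ^ j) • v j
      = v 0 * EPoly0 a k xb B h + (h : ℂ) * EPoly1 a k xb B h * v 1
        + ∑ ℓ ∈ range B, (h : ℂ) ^ (ℓ + 2) * FPoly a k xb ℓ B h * g ℓ := by
  have hterm (j : ℕ) (hj : 2 ≤ j) : ((j ! : ℝ)⁻¹ * h ^ j) • v j
      = v 0 * (Ej0 a k j xb * (h : ℂ) ^ j / (j ! : ℂ))
        + (h : ℂ) * (Ej1 a k j xb * (h : ℂ) ^ (j - 1) / (j ! : ℂ)) * v 1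
        + ∑ ℓ ∈ range (j - 1), Fjl a k j ℓ xb * (h : ℂ) ^ j / (j ! : ℂ) * g ℓ := by
    obtain ⟨i, rfl⟩ := Nat.exists_eq_add_of_le' (one_le_two.trans hj)
    rw [Complex.real_smul, hv _ hj, Nat.add_sub_cancel, mul_add, mul_sum]
    push_cast
    congr 1
    · ring
    · exact sum_congr rfl fun ℓ _ => by ring
  have hswap : ∑ j ∈ Icc 2 B, ∑ ℓ ∈ range (j - 1), Fjl a k j ℓ xb * (h : ℂ) ^ j / (j ! : ℂ) * g ℓ
      = ∑ ℓ ∈ range B, (h : ℂ) ^ (ℓ + 2) * FPoly a k xb ℓ B h * g ℓ := by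
    rw [sum_comm' (t' := range B) (s' := fun ℓ => Icc (ℓ + 2) B)
      (by intro j ℓ; simp only [mem_Icc, mem_range]; omega)]
    simp only [pow_mul_FPoly, sum_mul]
  have hlow : ∑ j ∈ range 2, ((j ! : ℝ)⁻¹ * h ^ j) • v j = v 0 + (h : ℂ) * v 1 := by
    simp [sum_range_succ]
  rw [range_eq_Ico, ← sum_Ico_consecutive _ (Nat.zero_le 2) (by omega : 2 ≤ B + 1),
    ← range_eq_Ico, hlow, Ico_add_one_right_eq_Icc,
    sum_congr rfl fun j hj => hterm j (mem_Icc.1 hj).1, sum_add_distrib, sum_add_distrib, hswap, ← mul_sum, ← sum_mul, ← mul_sum]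
  simp only [EPoly0, EPoly1]
  ring

variable {a k xb}

lemma EPoly0_succ_sub_isBigO (B : ℕ) :
    (fun h : ℝ => EPoly0 a k xb (B + 1) h - EPoly0 a k xb B h) =O[𝓝 0] fun h => h ^ (B + 1) :=
  (isBigO_sum_sub_sum_of_le (Icc_subset_Icc_right (a := 2) B.le_succ)
    (fun j hj => by simp only [Finset.mem_sdiff, Finset.mem_Icc] at hj; omega) _).congr_left
      fun h => by simp only [EPoly0]; ring

lemma pow_mul_FPoly_sub_isBigO (ℓ : ℕ) {B B' : ℕ} (hB : B ≤ B') :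
    (fun h : ℝ => (h : ℂ) ^ (ℓ + 2) * FPoly a k xb ℓ B' h - (h : ℂ) ^ (ℓ + 2) * FPoly a k xb ℓ B h)
      =O[𝓝 0] fun h => h ^ (B + 1) := by
  simp only [pow_mul_FPoly]
  exact isBigO_sum_sub_sum_of_le (Icc_subset_Icc_right (a := ℓ + 2) hB)
    (fun j hj => by simp only [Finset.mem_sdiff, Finset.mem_Icc] at hj; omega) _

lemma isBigO_boundary_residual_EPoly {c0 c1 : ℝ → ℂ} {lam0 lam1 U0 U1 : ℂ} {M : ℕ}
    (hc1O : c1 =O[𝓝 0] fun _ => (1 : ℝ))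
    (hc1 : (fun h : ℝ => c1 h * EPoly1 a k xb (M + 1) h - lam1) =O[𝓝 0] fun h => h ^ M)
    (hc0 : (fun h : ℝ => c0 h - (h : ℂ) * lam0 + c1 h * EPoly0 a k xb M h)
      =O[𝓝 0] fun h => h ^ (M + 1)) :
    (fun h : ℝ => c0 h * U0
        + c1 h * (U0 * EPoly0 a k xb (M + 1) h + h * EPoly1 a k xb (M + 1) h * U1)
        - h * (lam0 * U0 + lam1 * U1)) =O[𝓝 0] fun h => h ^ (M + 1) := by
  have htrunc := hc1O.mul (EPoly0_succ_sub_isBigO (a := a) (k := k) (xb := xb) M)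
  have hscaled := (Complex.isBigO_ofReal_left.2 (isBigO_refl (fun h : ℝ => h) _)).mul hc1
  simp only [one_mul, ← pow_succ'] at htrunc hscaled
  refine ((hc0.const_mul_left U0).add (htrunc.const_mul_left U0) |>.add
    (hscaled.const_mul_left U1)).congr_left fun h => ?_
  ring

lemma isBigO_boundary_residual_FPoly {c1 : ℝ → ℂ} {d : ℕ → ℝ → ℂ} {g : ℕ → ℂ} {M Mt : ℕ}
    (hMMt : Mt ≤ M) (hc1O : c1 =O[𝓝 0] fun _ => (1 : ℝ))
    (hd : ∀ ℓ < Mt, (fun h : ℝ => d ℓ h - (h : ℂ) * c1 h * FPoly a k xb ℓ (Mt + 1) h)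
      =O[𝓝 0] fun h => h ^ (Mt - ℓ)) :
    (fun h : ℝ => c1 h * ∑ ℓ ∈ range (M + 1), (h : ℂ) ^ (ℓ + 2) * FPoly a k xb ℓ (M + 1) h * g ℓ
        - h * ∑ ℓ ∈ range Mt, d ℓ h * (h : ℂ) ^ ℓ * g ℓ) =O[𝓝 0] fun h => h ^ (Mt + 1) := by
  have htrunc : (fun h : ℝ => ∑ ℓ ∈ range (M + 1), g ℓ * (c1 h *
      ((h : ℂ) ^ (ℓ + 2) * FPoly a k xb ℓ (M + 1) h
        - (h : ℂ) ^ (ℓ + 2) * FPoly a k xb ℓ (Mt + 1) h))) =O[𝓝 0] fun h => h ^ (Mt + 1) := by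
    refine IsBigO.fun_sum fun ℓ _ => IsBigO.const_mul_left ?_ _
    have := hc1O.mul (pow_mul_FPoly_sub_isBigO (a := a) (k := k) (xb := xb) ℓ
      (by omega : Mt + 1 ≤ M + 1))
    simp only [one_mul] at this
    exact this.trans (isBigO_pow_of_le (by omega))
  have hmatch : (fun h : ℝ => ∑ ℓ ∈ range Mt, g ℓ * ((h : ℂ) ^ (ℓ + 1) *
      (d ℓ h - (h : ℂ) * c1 h * FPoly a k xb ℓ (Mt + 1) h))) =O[𝓝 0] fun h => h ^ (Mt + 1) := by
    refine IsBigO.fun_sum fun ℓ hℓ => IsBigO.const_mul_left ?_ _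
    have hℓ := mem_range.1 hℓ
    refine ((isBigO_ofReal_pow (ℓ + 1)).mul (hd ℓ hℓ)).congr_right fun h => ?_
    rw [← pow_add]
    congr 1
    omega
  refine (htrunc.sub hmatch).congr_left fun h => ?_
  have hvanish : ∑ ℓ ∈ range (M + 1), g ℓ * (c1 h * ((h : ℂ) ^ (ℓ + 2) * FPoly a k xb ℓ (Mt + 1) h))
      = ∑ ℓ ∈ range Mt, g ℓ * (c1 h * ((h : ℂ) ^ (ℓ + 2) * FPoly a k xb ℓ (Mt + 1) h)) := by
    refine (sum_subset (range_subset_range.2 (by omega)) fun ℓ _ hℓ => ?_).symm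
    rw [FPoly_eq_zero_of_le a k xb (by simp only [mem_range] at hℓ; omega), mul_zero, mul_zero,
      mul_zero]
  have hF : ∑ ℓ ∈ range (M + 1), g ℓ * (c1 h * ((h : ℂ) ^ (ℓ + 2) * FPoly a k xb ℓ (M + 1) h
        - (h : ℂ) ^ (ℓ + 2) * FPoly a k xb ℓ (Mt + 1) h))
      = c1 h * ∑ ℓ ∈ range (M + 1), (h : ℂ) ^ (ℓ + 2) * FPoly a k xb ℓ (M + 1) h * g ℓ
        - ∑ ℓ ∈ range Mt, g ℓ * (c1 h * ((h : ℂ) ^ (ℓ + 2) * FPoly a k xb ℓ (Mt + 1) h)) := by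
    rw [mul_sum, ← hvanish, ← sum_sub_distrib]
    exact sum_congr rfl fun _ _ => by ring
  have hdsum : ∑ ℓ ∈ range Mt, g ℓ * ((h : ℂ) ^ (ℓ + 1) *
        (d ℓ h - (h : ℂ) * c1 h * FPoly a k xb ℓ (Mt + 1) h))
      = h * ∑ ℓ ∈ range Mt, d ℓ h * (h : ℂ) ^ ℓ * g ℓ
        - ∑ ℓ ∈ range Mt, g ℓ * (c1 h * ((h : ℂ) ^ (ℓ + 2) * FPoly a k xb ℓ (Mt + 1) h)) := by
    rw [mul_sum, ← sum_sub_distrib]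
    exact sum_congr rfl fun _ _ => by ring
  rw [hF, hdsum]
  ring

end Polynomials

theorem boundary_stencil_accuracy_order_general
    (p q : ℝ) (a : ℝ → ℝ) (k f : ℝ → ℂ)
    (ha : ContDiffOn ℝ (⊤ : ℕ∞) a (Set.Ioo p q))
    (hk : ContDiffOn ℝ (⊤ : ℕ∞) k (Set.Ioo p q))
    (hf : ContDiffOn ℝ (⊤ : ℕ∞) f (Set.Ioo p q))
    (hapos : ∀ x ∈ Set.Ioo p q, 0 < a x)
    (xb : ℝ) (hxb : xb ∈ Set.Ioo p q) (M Mt : ℕ) (hMMt : Mt ≤ M)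
    (lam0 lam1 : ℂ) (c0 c1 : ℝ → ℂ) (d : ℕ → ℝ → ℂ)
    (hc1cont : ∃ U ∈ 𝓝 (0 : ℝ), ContinuousOn c1 U)
    (hc1 : (fun h : ℝ => c1 h * EPoly1 a k xb (M + 1) h - lam1)
      =O[𝓝 (0 : ℝ)] fun h : ℝ => h ^ M)
    (hc0 : (fun h : ℝ => c0 h - (h : ℂ) * lam0 + c1 h * EPoly0 a k xb M h)
      =O[𝓝 (0 : ℝ)] fun h : ℝ => h ^ (M + 1))
    (hd : ∀ ℓ < Mt,
      (fun h : ℝ => d ℓ h - (h : ℂ) * c1 h * FPoly a k xb ℓ (Mt + 1) h)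
        =O[𝓝 (0 : ℝ)] fun h : ℝ => h ^ (Mt - ℓ)) :
    ∀ u : ℝ → ℂ, ContDiffOn ℝ (⊤ : ℕ∞) u (Set.Ioo p q) →
      (∀ x ∈ Set.Ioo p q, xb ≤ x →
        deriv (fun y => (a y : ℂ) * deriv u y) x + k x * u x = f x) →
      (fun h : ℝ => c0 h * u xb + c1 h * u (xb + h)
          - (h : ℂ) * ∑ ℓ ∈ Finset.range Mt, d ℓ h * (h : ℂ) ^ ℓ * iteratedDeriv ℓ f xb
          - (h : ℂ) * (lam0 * u xb + lam1 * deriv u xb))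
        =O[𝓝[>] (0 : ℝ)] fun h : ℝ => h ^ (Mt + 1) := by
  intro u hu hode
  have hderiv (j : ℕ) (hj : 2 ≤ j) : iteratedDeriv j u xb
      = Ej0 a k j xb * iteratedDeriv 0 u xb + Ej1 a k j xb * iteratedDeriv 1 u xb
        + ∑ ℓ ∈ range (j - 1), Fjl a k j ℓ xb * iteratedDeriv ℓ f xb := by
    obtain ⟨n, rfl⟩ := Nat.exists_eq_add_of_le' hj
    simpa [Ej0, Ej1, Fjl] using iteratedDeriv_eq_of_ode isOpen_Ioo ha hk hf hu
      (fun x hx => (hapos x hx).ne') hode n xb hxb le_rfl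
  have hc1O : c1 =O[𝓝 0] fun _ => (1 : ℝ) := by
    obtain ⟨U, hU, hc1U⟩ := hc1cont
    exact (hc1U.continuousAt hU).isBigO_one ℝ
  have hrem := hc1O.mul ((taylor_isLittleO_of_isOpen isOpen_Ioo (convex_Ioo p q)
    (hu.of_le (by exact_mod_cast le_top : ((M + 1 : ℕ) : WithTop ℕ∞) ≤ _)) hxb).isBigO.trans
      (isBigO_pow_of_le (by omega : Mt + 1 ≤ M + 1)))
  simp only [one_mul] at hrem
  refine IsBigO.mono ?_ nhdsWithin_le_nhds
  refine ((isBigO_boundary_residual_EPoly (U0 := u xb) (U1 := deriv u xb) hc1O hc1 hc0).trans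
    (isBigO_pow_of_le (by omega)) |>.add (isBigO_boundary_residual_FPoly
      (g := fun ℓ => iteratedDeriv ℓ f xb) hMMt hc1O hd) |>.add hrem).congr_left fun h => ?_
  rw [sum_taylor_eq_EPoly_FPoly a k xb hderiv (by omega) h]
  simp only [iteratedDeriv_zero, iteratedDeriv_one]
  ring

/-- Theorem 3.3, accuracy/boundary part.  Under the conditions (3.18) and
(3.19) on the boundary stencil coefficients `c₀, c₁` and `d₀, …, d_{M̃-1}`, the one-sided
boundary scheme approximates the boundary functional `B u = λ₀ u(x_b) + λ₁ u'(x_b)` with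
accuracy order `M̃` (in the `h`-scaled form, `O(h^{M̃+1})` as `h → 0⁺`) for every smooth
solution of `(a u')' + k u = f` on the right side of `x_b`. -/
theorem boundary_stencil_accuracy_order
    (p q : ℝ) (a : ℝ → ℝ) (k f : ℝ → ℂ)
    (ha : ContDiffOn ℝ (⊤ : ℕ∞) a (Set.Ioo p q))
    (hk : ContDiffOn ℝ (⊤ : ℕ∞) k (Set.Ioo p q))
    (hf : ContDiffOn ℝ (⊤ : ℕ∞) f (Set.Ioo p q))
    (hapos : ∀ x ∈ Set.Ioo p q, 0 < a x)
    (xb : ℝ) (hxb : xb ∈ Set.Ioo p q) (M Mt : ℕ) (hMt : 1 ≤ Mt) (hMMt : Mt ≤ M)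
    (lam0 lam1 : ℂ) (c0 c1 : ℝ → ℂ) (d : ℕ → ℝ → ℂ)
    (hc0cont : ∃ U ∈ 𝓝 (0 : ℝ), ContinuousOn c0 U)
    (hc1cont : ∃ U ∈ 𝓝 (0 : ℝ), ContinuousOn c1 U)
    (hdcont : ∀ ℓ < Mt, ∃ U ∈ 𝓝 (0 : ℝ), ContinuousOn (d ℓ) U)
    (hc1 : (fun h : ℝ => c1 h * EPoly1 a k xb (M + 1) h - lam1)
      =O[𝓝 (0 : ℝ)] fun h : ℝ => h ^ M)
    (hc0 : (fun h : ℝ => c0 h - (h : ℂ) * lam0 + c1 h * EPoly0 a k xb M h)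
      =O[𝓝 (0 : ℝ)] fun h : ℝ => h ^ (M + 1))
    (hd : ∀ ℓ < Mt,
      (fun h : ℝ => d ℓ h - (h : ℂ) * c1 h * FPoly a k xb ℓ (Mt + 1) h)
        =O[𝓝 (0 : ℝ)] fun h : ℝ => h ^ (Mt - ℓ)) :
    ∀ u : ℝ → ℂ, ContDiffOn ℝ (⊤ : ℕ∞) u (Set.Ioo p q) →
      (∀ x ∈ Set.Ioo p q, xb ≤ x →
        deriv (fun y => (a y : ℂ) * deriv u y) x + k x * u x = f x) →
      (fun h : ℝ => c0 h * u xb + c1 h * u (xb + h)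
          - (h : ℂ) * ∑ ℓ ∈ Finset.range Mt, d ℓ h * (h : ℂ) ^ ℓ * iteratedDeriv ℓ f xb
          - (h : ℂ) * (lam0 * u xb + lam1 * deriv u xb))
        =O[𝓝[>] (0 : ℝ)] fun h : ℝ => h ^ (Mt + 1) :=
  boundary_stencil_accuracy_order_general p q a k f ha hk hf hapos xb hxb M Mt hMMt lam0 lam1 c0 c1
    d hc1cont hc1 hc0 hd
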